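/- Define the dependency graph G = (V, H) on nodes v₂, ..., v_{2n} where v_i has incoming edge (v_{R(i)}, v_i) precisely when LCP_A[i] ≥ 1 (R(i) being the index of a minimum LCP entry in the corresponding predecessor range), and v_i has no incoming edge when LCP_A[i] = 0. Then every node of G has at most one incoming edge, and moreover LCP_A[i] = 1 + LCP_A[R(i)] whenever R(i) is defined. -/

import Mathlib

/-- Lexicographic (non-strict) order on infinite strings. -/
def seqLe {A : Type*} [LinearOrder A] (α β : ℕ → A) : Prop :=
  α = β ∨ ∃ n, (∀ m < n, α m = β m) ∧ α n < β n

open Classical in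
/-- Length (possibly `∞`) of the longest common prefix of two infinite strings. -/
noncomputable def seqLcp {A : Type*} (α β : ℕ → A) : ℕ∞ :=
  if h : α = β then ⊤ else ((Nat.find (Function.ne_iff.mp h) : ℕ) : ℕ∞)

/-- `Readable label E α i`: `α` can be read from state `i` following edges backward. -/
def Readable {n : ℕ} {A : Type*} (label : Fin n → A) (E : Fin n → Fin n → Prop)
    (α : ℕ → A) (i : Fin n) : Prop :=
  ∃ f : ℕ → Fin n, f 0 = i ∧ (∀ k, E (f (k + 1)) (f k)) ∧ ∀ k, α k = label (f k)


def seqCons {A : Type*} (a : A) (α : ℕ → A) : ℕ → A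
  | 0 => a
  | k+1 => α k

lemma seqCons_shift {A : Type*} (α : ℕ → A) : seqCons (α 0) (fun k => α (k+1)) = α :=
  funext fun k => by cases k <;> rfl

lemma seqLe_refl {A : Type*} [LinearOrder A] (α : ℕ → A) : seqLe α α := Or.inl rfl

lemma seqLcp_self {A : Type*} (α : ℕ → A) : seqLcp α α = ⊤ := dif_pos rfl

lemma find_eq_of {p : ℕ → Prop} {inst : DecidablePred p} (h : ∃ n, p n) (d : ℕ)
    (h1 : ∀ m < d, ¬ p m) (h2 : p d) : @Nat.find p inst h = d := by
  refine le_antisymm (Nat.find_min' _ h2) ?_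
  by_contra hc
  push_neg at hc
  exact h1 _ hc (Nat.find_spec h)

lemma seqLcp_eq_of {A : Type*} [LinearOrder A] {α β : ℕ → A} (d : ℕ)
    (hpre : ∀ m < d, α m = β m) (hd : α d ≠ β d) : seqLcp α β = (d : ℕ∞) := by
  have hne : α ≠ β := fun h => hd (congrFun h d)
  rw [seqLcp, dif_neg hne]
  rw [find_eq_of (Function.ne_iff.mp hne) d (fun m hm => not_not.mpr (hpre m hm)) hd]

lemma seqLe_trans {A : Type*} [LinearOrder A] {α β γ : ℕ → A}
    (h1 : seqLe α β) (h2 : seqLe β γ) : seqLe α γ := by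
  by_cases hab : α = β
  · exact hab ▸ h2
  by_cases hbc : β = γ
  · exact hbc ▸ h1
  obtain ⟨d1, p1, l1⟩ := h1.resolve_left hab
  obtain ⟨d2, p2, l2⟩ := h2.resolve_left hbc
  refine Or.inr ⟨min d1 d2, fun m hm => (p1 m (lt_of_lt_of_le hm (min_le_left _ _))).trans
    (p2 m (lt_of_lt_of_le hm (min_le_right _ _))), ?_⟩
  rcases lt_trichotomy d1 d2 with h | h | h
  · rw [min_eq_left h.le]; exact l1.trans_eq (p2 _ h)
  · subst h; rw [min_self]; exact l1.trans l2
  · rw [min_eq_right h.le]; exact (p1 _ h).trans_lt l2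

lemma seqLe_antisymm {A : Type*} [LinearOrder A] {α β : ℕ → A}
    (h1 : seqLe α β) (h2 : seqLe β α) : α = β := by
  by_contra hab
  obtain ⟨d1, p1, l1⟩ := h1.resolve_left hab
  obtain ⟨d2, p2, l2⟩ := h2.resolve_left (Ne.symm hab)
  rcases lt_trichotomy d1 d2 with h | h | h
  · exact absurd (p2 _ h) l1.ne'
  · subst h; exact absurd (l1.trans l2) (lt_irrefl _)
  · exact absurd (p1 _ h) l2.ne'

lemma seqLe_cons {A : Type*} [LinearOrder A] (a : A) {α β : ℕ → A}
    (h : seqLe α β) : seqLe (seqCons a α) (seqCons a β) := by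
  rcases h with rfl | ⟨d, hpre, hlt⟩
  · exact Or.inl rfl
  · refine Or.inr ⟨d + 1, fun m hm => ?_, hlt⟩
    match m, hm with
    | 0, _ => rfl
    | k+1, hm => exact hpre k (by omega)

lemma seqLcp_min {A : Type*} [LinearOrder A] {α β γ : ℕ → A}
    (h1 : seqLe α β) (h2 : seqLe β γ) :
    seqLcp α γ = min (seqLcp α β) (seqLcp β γ) := by
  by_cases hab : α = β
  · subst hab; rw [seqLcp_self]; simp
  by_cases hbc : β = γ
  · subst hbc; rw [seqLcp_self]; simp
  obtain ⟨d1, p1, l1⟩ := h1.resolve_left hab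
  obtain ⟨d2, p2, l2⟩ := h2.resolve_left hbc
  have e1 : seqLcp α β = (d1 : ℕ∞) := seqLcp_eq_of d1 p1 l1.ne
  have e2 : seqLcp β γ = (d2 : ℕ∞) := seqLcp_eq_of d2 p2 l2.ne
  have e3 : seqLcp α γ = ((min d1 d2 : ℕ) : ℕ∞) := by
    refine seqLcp_eq_of _ (fun m hm => (p1 m (lt_of_lt_of_le hm (min_le_left _ _))).trans
      (p2 m (lt_of_lt_of_le hm (min_le_right _ _)))) ?_
    rcases lt_trichotomy d1 d2 with h | h | h
    · rw [min_eq_left h.le]; exact (l1.trans_eq (p2 _ h)).ne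
    · subst h; rw [min_self]; exact (l1.trans l2).ne
    · rw [min_eq_right h.le]; exact ((p1 _ h).trans_lt l2).ne
  rw [e1, e2, e3]
  exact_mod_cast rfl

lemma seqLcp_cons {A : Type*} [LinearOrder A] (a : A) (α β : ℕ → A) :
    seqLcp (seqCons a α) (seqCons a β) = 1 + seqLcp α β := by
  by_cases h : α = β
  · subst h; rw [seqLcp_self, seqLcp_self]; rfl
  · obtain ⟨d, hd⟩ := Function.ne_iff.mp h
    -- take the least difference
    obtain ⟨d0, hp0, hd0⟩ : ∃ d0, (∀ m < d0, α m = β m) ∧ α d0 ≠ β d0 := by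
      induction d using Nat.strong_induction_on with
      | _ d ih =>
        by_cases hall : ∀ m < d, α m = β m
        · exact ⟨d, hall, hd⟩
        · push_neg at hall
          obtain ⟨m, hm, hne⟩ := hall
          exact ih m hm hne
    have e1 : seqLcp α β = (d0 : ℕ∞) := seqLcp_eq_of d0 hp0 hd0
    have e2 : seqLcp (seqCons a α) (seqCons a β) = ((d0 + 1 : ℕ) : ℕ∞) := by
      refine seqLcp_eq_of _ (fun m hm => ?_) hd0
      match m, hm with
      | 0, _ => rfl
      | k+1, hm => exact hp0 k (by omega)
    rw [e1, e2]
    push_cast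
    ring

section Graph
variable {n : ℕ} {A : Type*} [LinearOrder A] {label : Fin n → A} {E : Fin n → Fin n → Prop}

lemma readable_le
    (hax1 : ∀ u v : Fin n, u < v → label u ≤ label v)
    (hax2 : ∀ u' u v' v : Fin n, E u' u → E v' v → label u = label v → u < v → u' < v')
    {i i' : Fin n} (hii : i < i') {α β : ℕ → A}
    (hα : Readable label E α i) (hβ : Readable label E β i') : seqLe α β := by
  obtain ⟨g, hg0, hgE, hgl⟩ := hα
  obtain ⟨g', hg'0, hg'E, hg'l⟩ := hβ
  have key : ∀ m, (∀ k < m, α k = β k) → g m < g' m := by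
    intro m
    induction m with
    | zero => intro _; rw [hg0, hg'0]; exact hii
    | succ m ih =>
      intro hpre
      have hm := ih (fun k hk => hpre k (by omega))
      have : label (g m) = label (g' m) := by
        rw [← hgl m, ← hg'l m]; exact hpre m (by omega)
      exact hax2 _ _ _ _ (hgE m) (hg'E m) this hm
  by_cases h : α = β
  · exact Or.inl h
  · obtain ⟨d, hd⟩ := Function.ne_iff.mp h
    obtain ⟨d0, hp0, hd0⟩ : ∃ d0, (∀ m < d0, α m = β m) ∧ α d0 ≠ β d0 := by
      induction d using Nat.strong_induction_on with
      | _ d ih =>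
        by_cases hall : ∀ m < d, α m = β m
        · exact ⟨d, hall, hd⟩
        · push_neg at hall
          obtain ⟨m, hm, hne⟩ := hall
          exact ih m hm hne
    refine Or.inr ⟨d0, hp0, ?_⟩
    have := hax1 _ _ (key d0 hp0)
    rw [hgl d0, hg'l d0] at hd0
    rw [hgl d0, hg'l d0]
    exact lt_of_le_of_ne this hd0

omit [LinearOrder A] in
lemma readable_cons {u i : Fin n} (hE : E u i) {α : ℕ → A}
    (hα : Readable label E α u) : Readable label E (seqCons (label i) α) i := by
  obtain ⟨g, hg0, hgE, hgl⟩ := hα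
  refine ⟨fun k => match k with | 0 => i | k+1 => g k, rfl, fun k => ?_, fun k => ?_⟩
  · match k with
    | 0 => show E (g 0) i; rw [hg0]; exact hE
    | k+1 => exact hgE k
  · match k with
    | 0 => rfl
    | k+1 => exact hgl k

lemma mn_cons
    (hax1 : ∀ u v : Fin n, u < v → label u ≤ label v)
    (hax2 : ∀ u' u v' v : Fin n, E u' u → E v' v → label u = label v → u < v → u' < v')
    {mn : Fin n → ℕ → A}
    (hmn : ∀ i, Readable label E (mn i) i ∧ ∀ α, Readable label E α i → seqLe (mn i) α)
    {pmin : Fin n → Fin n}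
    (hpmin : ∀ i : Fin n, E (pmin i) i ∧ ∀ j, E j i → pmin i ≤ j)
    (i : Fin n) : mn i = seqCons (label i) (mn (pmin i)) := by
  obtain ⟨⟨g, hg0, hgE, hgl⟩, hminimal⟩ := hmn i
  have hpred : E (g 1) i := hg0 ▸ hgE 0
  have h1 : Readable label E (fun k => mn i (k+1)) (g 1) :=
    ⟨fun k => g (k+1), rfl, fun k => hgE (k+1), fun k => hgl (k+1)⟩
  have hle1 : pmin i ≤ g 1 := (hpmin i).2 _ hpred
  have hB : seqLe (mn (pmin i)) (fun k => mn i (k+1)) := by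
    rcases hle1.lt_or_eq with h | h
    · exact readable_le hax1 hax2 h (hmn (pmin i)).1 h1
    · rw [h]; exact (hmn (g 1)).2 _ h1
  have hA : seqLe (mn i) (seqCons (label i) (mn (pmin i))) :=
    hminimal _ (readable_cons (hpmin i).1 (hmn (pmin i)).1)
  have h0 : mn i 0 = label i := by rw [hgl 0, hg0]
  have hcs : seqCons (label i) (fun k => mn i (k+1)) = mn i := by
    rw [← h0]; exact seqCons_shift (mn i)
  exact seqLe_antisymm hA (hcs ▸ seqLe_cons (label i) hB)

lemma mx_cons
    (hax1 : ∀ u v : Fin n, u < v → label u ≤ label v)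
    (hax2 : ∀ u' u v' v : Fin n, E u' u → E v' v → label u = label v → u < v → u' < v')
    {mx : Fin n → ℕ → A}
    (hmx : ∀ i, Readable label E (mx i) i ∧ ∀ α, Readable label E α i → seqLe α (mx i))
    {pmax : Fin n → Fin n}
    (hpmax : ∀ i : Fin n, E (pmax i) i ∧ ∀ j, E j i → j ≤ pmax i)
    (i : Fin n) : mx i = seqCons (label i) (mx (pmax i)) := by
  obtain ⟨⟨g, hg0, hgE, hgl⟩, hmaximal⟩ := hmx i
  have hpred : E (g 1) i := hg0 ▸ hgE 0
  have h1 : Readable label E (fun k => mx i (k+1)) (g 1) :=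
    ⟨fun k => g (k+1), rfl, fun k => hgE (k+1), fun k => hgl (k+1)⟩
  have hle1 : g 1 ≤ pmax i := (hpmax i).2 _ hpred
  have hB : seqLe (fun k => mx i (k+1)) (mx (pmax i)) := by
    rcases hle1.lt_or_eq with h | h
    · exact readable_le hax1 hax2 h h1 (hmx (pmax i)).1
    · rw [← h]; exact (hmx (g 1)).2 _ h1
  have hA : seqLe (seqCons (label i) (mx (pmax i))) (mx i) :=
    hmaximal _ (readable_cons (hpmax i).1 (hmx (pmax i)).1)
  have h0 : mx i 0 = label i := by rw [hgl 0, hg0]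
  have hcs : seqCons (label i) (fun k => mx i (k+1)) = mx i := by
    rw [← h0]; exact seqCons_shift (mx i)
  exact seqLe_antisymm (hcs ▸ seqLe_cons (label i) hB) hA

end Graph

lemma chain_le {A : Type*} [LinearOrder A] (σ : ℕ → ℕ → A) (a : ℕ) :
    ∀ m, (∀ k < m, seqLe (σ (a+k)) (σ (a+k+1))) → seqLe (σ a) (σ (a+m)) := by
  intro m
  induction m with
  | zero => intro _; exact seqLe_refl _
  | succ m ih =>
    intro h
    exact seqLe_trans (ih (fun k hk => h k (by omega))) (h m (by omega))

lemma chain_lcp {A : Type*} [LinearOrder A] (σ : ℕ → ℕ → A) (g : ℕ → ℕ∞) (a : ℕ) :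
    ∀ m, (∀ k < m, seqLe (σ (a+k)) (σ (a+k+1))) →
      (∀ t, a+1 ≤ t → t ≤ a+m → g t = seqLcp (σ (t-1)) (σ t)) →
      (Finset.Icc (a+1) (a+m)).inf g = seqLcp (σ a) (σ (a+m)) := by
  intro m
  induction m with
  | zero =>
    intro _ _
    rw [Finset.Icc_eq_empty (by omega), Finset.inf_empty]
    exact (seqLcp_self _).symm
  | succ m ih =>
    intro hch hg
    have hins : Finset.Icc (a+1) (a+(m+1)) = insert (a+m+1) (Finset.Icc (a+1) (a+m)) := by
      rw [show a+(m+1) = (a+m)+1 by omega, ← Finset.insert_Icc_right_eq_Icc_add_one (by omega)]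
    rw [hins, Finset.inf_insert,
      ih (fun k hk => hch k (by omega)) (fun t h1 h2 => hg t h1 (by omega)),
      hg (a+m+1) (by omega) (by omega)]
    have htail : seqLe (σ (a+m)) (σ (a+m+1)) := hch m (by omega)
    rw [show a+m+1-1 = a+m by omega, show a+(m+1) = a+m+1 by omega,
      seqLcp_min (chain_le σ a m (fun k hk => hch k (by omega))) htail]
    rw [min_comm]


def sigmaStr {n : ℕ} {A : Type*} (hn : 0 < n) (mn mx : Fin n → ℕ → A) : ℕ → ℕ → A :=
  fun t => if t % 2 = 1 then mn ⟨(t-1)/2 % n, Nat.mod_lt _ hn⟩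
           else mx ⟨(t/2-1) % n, Nat.mod_lt _ hn⟩

lemma sigmaStr_odd {n : ℕ} {A : Type*} (hn : 0 < n) (mn mx : Fin n → ℕ → A)
    (k : ℕ) (hk : k < n) : sigmaStr hn mn mx (2*k+1) = mn ⟨k, hk⟩ := by
  unfold sigmaStr
  rw [if_pos (by omega : (2*k+1) % 2 = 1)]
  refine congrArg mn (Fin.ext ?_)
  show (2*k+1-1)/2 % n = k
  rw [show (2*k+1-1)/2 = k by omega, Nat.mod_eq_of_lt hk]

lemma sigmaStr_even {n : ℕ} {A : Type*} (hn : 0 < n) (mn mx : Fin n → ℕ → A)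
    (k : ℕ) (hk : k < n) : sigmaStr hn mn mx (2*k+2) = mx ⟨k, hk⟩ := by
  unfold sigmaStr
  rw [if_neg (by omega : ¬ (2*k+2) % 2 = 1)]
  refine congrArg mx (Fin.ext ?_)
  show ((2*k+2)/2 - 1) % n = k
  rw [show (2*k+2)/2 - 1 = k by omega, Nat.mod_eq_of_lt hk]

set_option linter.unusedVariables false in
/-- the dependency graph on the LCP-array indices `[2, 2n]`
(0-based states: the paper's entry `LCP_A[2p]` is `f (2*i+2)` for `i = p-1`, and
`LCP_A[2p-1]` is `f (2*i+1)`), where index `t` has incoming edge `(R t, t)`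
precisely when `LCP_A[t] ≥ 1`, `R t` being an index achieving the minimum of the
LCP array over the corresponding predecessor range. Then every node has at most
one incoming edge, and `LCP_A[t] = 1 + LCP_A[R t]` whenever `R t` is defined. -/
theorem dependency_graph_recursion {n : ℕ} {A : Type*} [LinearOrder A]
    (label : Fin n → A) (E : Fin n → Fin n → Prop)
    (hdet : ∀ u v w : Fin n, E u v → E u w → label v = label w → v = w)
    (hax1 : ∀ u v : Fin n, u < v → label u ≤ label v)
    (hax2 : ∀ u' u v' v : Fin n, E u' u → E v' v → label u = label v → u < v → u' < v')
    (hin : ∀ v : Fin n, ∃ u, E u v)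
    (mn mx : Fin n → ℕ → A)
    (hmn : ∀ i, Readable label E (mn i) i ∧ ∀ α, Readable label E α i → seqLe (mn i) α)
    (hmx : ∀ i, Readable label E (mx i) i ∧ ∀ α, Readable label E α i → seqLe α (mx i))
    (pmin pmax : Fin n → Fin n)
    (hpmin : ∀ i : Fin n, E (pmin i) i ∧ ∀ j, E j i → pmin i ≤ j)
    (hpmax : ∀ i : Fin n, E (pmax i) i ∧ ∀ j, E j i → j ≤ pmax i)
    (f : ℕ → ℕ∞)
    (hfe : ∀ i : Fin n, f (2 * (i : ℕ) + 2) = seqLcp (mn i) (mx i))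
    (hfo : ∀ i j : Fin n, (j : ℕ) + 1 = (i : ℕ) → f (2 * (i : ℕ) + 1) = seqLcp (mx j) (mn i))
    (R : ℕ → Option ℕ)
    -- `R` at an odd index `2i+1` with equal consecutive labels: an argmin of `f`
    -- over `[2·p_max(j)+3, 2·p_min(i)+1]`
    (hRodd : ∀ i j : Fin n, (j : ℕ) + 1 = (i : ℕ) → label j = label i →
      ∃ t, R (2 * (i : ℕ) + 1) = some t ∧
        t ∈ Finset.Icc (2 * (pmax j : ℕ) + 3) (2 * (pmin i : ℕ) + 1) ∧
        f t = (Finset.Icc (2 * (pmax j : ℕ) + 3) (2 * (pmin i : ℕ) + 1)).inf f)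
    -- `R` is undefined at an odd index whose LCP entry is `0`
    (hRoddNone : ∀ i j : Fin n, (j : ℕ) + 1 = (i : ℕ) → label j ≠ label i →
      R (2 * (i : ℕ) + 1) = none)
    -- `R` at an even index `2i+2`: an argmin of `f` over `[2·p_min(i)+2, 2·p_max(i)+2]`
    (hReven : ∀ i : Fin n,
      ∃ t, R (2 * (i : ℕ) + 2) = some t ∧
        t ∈ Finset.Icc (2 * (pmin i : ℕ) + 2) (2 * (pmax i : ℕ) + 2) ∧
        f t = (Finset.Icc (2 * (pmin i : ℕ) + 2) (2 * (pmax i : ℕ) + 2)).inf f) :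
    (∀ p q q' : ℕ, R p = some q → R p = some q' → q = q') ∧
    (∀ p q : ℕ, 2 ≤ p → p ≤ 2 * n → R p = some q → f p = 1 + f q) := by
  refine ⟨fun p q q' h1 h2 => by rw [h1] at h2; exact Option.some.inj h2, ?_⟩
  intro p q hp2 hp2n hRq
  have hn : 0 < n := by omega
  set σ : ℕ → ℕ → A := sigmaStr hn mn mx with hσdef
  rcases Nat.even_or_odd p with ⟨l0, hl0⟩ | ⟨l0, hl0⟩
  · -- even case : p = 2*i+2
    obtain ⟨i, hi, hpeq⟩ : ∃ i, i < n ∧ p = 2*i+2 := ⟨l0 - 1, by omega, by omega⟩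
    set I : Fin n := ⟨i, hi⟩ with hIdef
    obtain ⟨t, hRt, htmem, hft⟩ := hReven I
    have hq : q = t := by
      rw [hpeq] at hRq
      exact Option.some.inj ((hRq.symm.trans hRt : some q = some t))
    have hpm : (pmin I : ℕ) ≤ (pmax I : ℕ) := Fin.le_def.mp ((hpmax I).2 _ (hpmin I).1)
    have hpmaxlt : (pmax I : ℕ) < n := (pmax I).isLt
    have hpminlt : (pmin I : ℕ) < n := (pmin I).isLt
    obtain ⟨a0, ha0⟩ : ∃ a0, a0 = 2*(pmin I : ℕ)+1 := ⟨_, rfl⟩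
    obtain ⟨m0, hm0⟩ : ∃ m0, m0 = 2*((pmax I : ℕ) - (pmin I : ℕ))+1 := ⟨_, rfl⟩
    have hch : ∀ k < m0, seqLe (σ (a0+k)) (σ (a0+k+1)) := by
      intro k hk
      rcases Nat.even_or_odd k with ⟨l, hl⟩ | ⟨l, hl⟩
      · have hK : (pmin I : ℕ) + l < n := by omega
        rw [show a0 + k + 1 = 2*((pmin I : ℕ)+l)+2 by omega,
            show a0 + k = 2*((pmin I : ℕ)+l)+1 by omega, hσdef,
            sigmaStr_odd hn mn mx _ hK, sigmaStr_even hn mn mx _ hK]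
        exact (hmx _).2 _ (hmn _).1
      · have hK1 : (pmin I : ℕ) + l + 1 < n := by omega
        have hK : (pmin I : ℕ) + l < n := by omega
        rw [show a0 + k + 1 = 2*((pmin I : ℕ)+l+1)+1 by omega,
            show a0 + k = 2*((pmin I : ℕ)+l)+2 by omega, hσdef,
            sigmaStr_even hn mn mx _ hK, sigmaStr_odd hn mn mx _ hK1]
        exact readable_le hax1 hax2 (Fin.mk_lt_mk.mpr (by omega)) (hmx _).1 (hmn _).1
    have hgc : ∀ t', a0+1 ≤ t' → t' ≤ a0+m0 → f t' = seqLcp (σ (t'-1)) (σ t') := by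
      intro t' h1 h2
      rcases Nat.even_or_odd t' with ⟨l, hl⟩ | ⟨l, hl⟩
      · have hK : l - 1 < n := by omega
        rw [show t' - 1 = 2*(l-1)+1 by omega, show t' = 2*(l-1)+2 by omega, hσdef,
            sigmaStr_odd hn mn mx _ hK, sigmaStr_even hn mn mx _ hK]
        exact hfe ⟨l-1, hK⟩
      · have hK : l < n := by omega
        have hK' : l - 1 < n := by omega
        rw [show t' - 1 = 2*(l-1)+2 by omega, show t' = 2*l+1 by omega, hσdef,
            sigmaStr_even hn mn mx _ hK', sigmaStr_odd hn mn mx _ hK]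
        exact hfo ⟨l, hK⟩ ⟨l-1, hK'⟩ (by show l-1+1 = l; omega)
    have hchain := chain_lcp σ f a0 m0 hch hgc
    rw [show a0 + m0 = 2*(pmax I : ℕ)+2 by omega, ha0, hσdef,
        sigmaStr_odd hn mn mx _ hpminlt, sigmaStr_even hn mn mx _ hpmaxlt,
        show 2*(pmin I : ℕ)+1+1 = 2*(pmin I : ℕ)+2 by omega] at hchain
    have hfp : f p = seqLcp (mn I) (mx I) := by rw [hpeq]; exact hfe I
    rw [hfp, mn_cons hax1 hax2 hmn hpmin I, mx_cons hax1 hax2 hmx hpmax I,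
        seqLcp_cons, hq, hft]
    congr 1
    exact hchain.symm
  · -- odd case : p = 2*i+1
    obtain ⟨i, hi, hi1, hpeq⟩ : ∃ i, i < n ∧ 1 ≤ i ∧ p = 2*i+1 := ⟨l0, by omega, by omega, by omega⟩
    set I : Fin n := ⟨i, hi⟩ with hIdef
    set J : Fin n := ⟨i-1, by omega⟩ with hJdef
    have hJI : (J : ℕ) + 1 = (I : ℕ) := by show i-1+1 = i; omega
    by_cases hlab : label J = label I
    swap
    · exfalso
      have := hRoddNone I J hJI hlab
      rw [hpeq] at hRq
      rw [hRq] at this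
      exact Option.some_ne_none _ this
    obtain ⟨t, hRt, htmem, hft⟩ := hRodd I J hJI hlab
    have hq : q = t := by
      rw [hpeq] at hRq
      exact Option.some.inj ((hRq.symm.trans hRt : some q = some t))
    have hlt : (pmax J : ℕ) < (pmin I : ℕ) :=
      Fin.lt_def.mp (hax2 _ _ _ _ (hpmax J).1 (hpmin I).1 hlab (Fin.mk_lt_mk.mpr (by omega)))
    have hpminlt : (pmin I : ℕ) < n := (pmin I).isLt
    have hpmaxlt : (pmax J : ℕ) < n := (pmax J).isLt
    obtain ⟨a0, ha0⟩ : ∃ a0, a0 = 2*(pmax J : ℕ)+2 := ⟨_, rfl⟩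
    obtain ⟨m0, hm0⟩ : ∃ m0, m0 = 2*((pmin I : ℕ) - (pmax J : ℕ)) - 1 := ⟨_, rfl⟩
    have ham : a0 + m0 = 2*(pmin I : ℕ)+1 := by omega
    have hch : ∀ k < m0, seqLe (σ (a0+k)) (σ (a0+k+1)) := by
      intro k hk
      rcases Nat.even_or_odd k with ⟨l, hl⟩ | ⟨l, hl⟩
      · have hK1 : (pmax J : ℕ) + l + 1 < n := by omega
        have hK : (pmax J : ℕ) + l < n := by omega
        rw [show a0 + k + 1 = 2*((pmax J : ℕ)+l+1)+1 by omega,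
            show a0 + k = 2*((pmax J : ℕ)+l)+2 by omega, hσdef,
            sigmaStr_even hn mn mx _ hK, sigmaStr_odd hn mn mx _ hK1]
        exact readable_le hax1 hax2 (Fin.mk_lt_mk.mpr (by omega)) (hmx _).1 (hmn _).1
      · have hK : (pmax J : ℕ) + l + 1 < n := by omega
        rw [show a0 + k + 1 = 2*((pmax J : ℕ)+l+1)+2 by omega,
            show a0 + k = 2*((pmax J : ℕ)+l+1)+1 by omega, hσdef,
            sigmaStr_odd hn mn mx _ hK, sigmaStr_even hn mn mx _ hK]
        exact (hmx _).2 _ (hmn _).1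
    have hgc : ∀ t', a0+1 ≤ t' → t' ≤ a0+m0 → f t' = seqLcp (σ (t'-1)) (σ t') := by
      intro t' h1 h2
      rcases Nat.even_or_odd t' with ⟨l, hl⟩ | ⟨l, hl⟩
      · have hK : l - 1 < n := by omega
        rw [show t' - 1 = 2*(l-1)+1 by omega, show t' = 2*(l-1)+2 by omega, hσdef,
            sigmaStr_odd hn mn mx _ hK, sigmaStr_even hn mn mx _ hK]
        exact hfe ⟨l-1, hK⟩
      · have hK : l < n := by omega
        have hK' : l - 1 < n := by omega
        rw [show t' - 1 = 2*(l-1)+2 by omega, show t' = 2*l+1 by omega, hσdef,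
            sigmaStr_even hn mn mx _ hK', sigmaStr_odd hn mn mx _ hK]
        exact hfo ⟨l, hK⟩ ⟨l-1, hK'⟩ (by show l-1+1 = l; omega)
    have hchain := chain_lcp σ f a0 m0 hch hgc
    rw [show a0 + m0 = 2*(pmin I : ℕ)+1 by omega, ha0, hσdef,
        sigmaStr_even hn mn mx _ hpmaxlt, sigmaStr_odd hn mn mx _ hpminlt,
        show 2*(pmax J : ℕ)+2+1 = 2*(pmax J : ℕ)+3 by omega] at hchain
    have hfp : f p = seqLcp (mx J) (mn I) := by rw [hpeq]; exact hfo I J hJI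
    rw [hfp, mn_cons hax1 hax2 hmn hpmin I, mx_cons hax1 hax2 hmx hpmax J, hlab,
        seqLcp_cons, hq, hft]
    congr 1
    exact hchain.symm
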